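/- The vertex set of the fully truncated hypercube TC_n (n ≥ 2), i.e., the set of points of R^n having exactly one coordinate equal to 0 and all other coordinates equal to ±1, with the induced Euclidean metric, is 2-point homogeneous. -/

import Mathlib

/-!
Signed permutations of the coordinates are isometries of `TCₙ`. Given two vertices `A₁, A₂`,
sort the coordinates `a` by the orbit of `(A₁ a, A₂ a) ∈ {0, ±1}²` under a common change of
sign. A signed permutation carries `(A₁, A₂)` to `(B₁, B₂)` as soon as every orbit occurs
equally often for both pairs. There are five orbits, with counts `N₀, …, N₄`; since every vertex
has exactly one zero coordinate, `N₀ + N₁ = N₀ + N₂ = 1` and `∑ Nᵢ = n`, while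
`|A₁ - A₂|² = N₁ + N₂ + 4 N₄`. These relations determine all counts from the distance.
-/

open Finset

/-- The vertex set of the fully truncated hypercube `TCₙ`: points of `ℝⁿ` with exactly one
coordinate equal to `0` and all other coordinates equal to `±1`. -/
def TCset (n : ℕ) : Set (EuclideanSpace ℝ (Fin n)) :=
  {p | ∃ i₀ : Fin n, p i₀ = 0 ∧ ∀ i : Fin n, i ≠ i₀ → p i = 1 ∨ p i = -1}

def IsometryEquiv.subtypeEquiv {α β : Type*} [PseudoEMetricSpace α] [PseudoEMetricSpace β]
    {p : α → Prop} {q : β → Prop} (e : α ≃ᵢ β) (h : ∀ a, p a ↔ q (e a)) :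
    {a // p a} ≃ᵢ {b // q b} where
  toEquiv := e.toEquiv.subtypeEquiv h
  isometry_toFun _ _ := e.isometry _ _

lemma exists_perm_comp_eq_of_card_fiber_eq {α C : Type*} [Fintype α] [DecidableEq C]
    {f g : α → C} (h : ∀ c, Fintype.card {a // f a = c} = Fintype.card {a // g a = c}) :
    ∃ σ : Equiv.Perm α, ∀ a, g (σ a) = f a :=
  ⟨Equiv.ofFiberEquiv fun c => Fintype.equivOfCardEq (h c), Equiv.ofFiberEquiv_map _⟩

section SignedPerm

variable {ι : Type*} [Fintype ι]

noncomputable def signedPerm (σ : Equiv.Perm ι) (ε : ι → unitary ℝ) :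
    EuclideanSpace ℝ ι ≃ₗᵢ[ℝ] EuclideanSpace ℝ ι :=
  (LinearIsometryEquiv.piLpCongrLeft 2 ℝ ℝ σ).trans
    (LinearIsometryEquiv.piLpCongrRight 2 fun i => Unitary.mulLeft ℝ ℝ (ε i))

@[simp]
lemma signedPerm_apply (σ : Equiv.Perm ι) (ε : ι → unitary ℝ) (p : EuclideanSpace ℝ ι) (i : ι) :
    signedPerm σ ε p i = ε i * p (σ.symm i) := by
  simp [signedPerm]

lemma abs_signedPerm_apply (σ : Equiv.Perm ι) (ε : ι → unitary ℝ) (p : EuclideanSpace ℝ ι)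
    (i : ι) : |signedPerm σ ε p i| = |p (σ.symm i)| := by
  rw [signedPerm_apply, abs_mul, ← Real.norm_eq_abs (ε i : ℝ), CStarRing.norm_coe_unitary, one_mul]

end SignedPerm

/-- `pairClass x y` indexes the orbit of `(x, y) ∈ {0, ±1}²` under a common change of sign,
and `pairRep` picks a representative of each orbit. -/
noncomputable def pairClass (x y : ℝ) : Fin 5 :=
  if x = 0 then (if y = 0 then 0 else 1) else if y = 0 then 2 else if x = y then 3 else 4

def pairRep : Fin 5 → ℝ × ℝ
  | 0 => (0, 0) | 1 => (0, 1) | 2 => (1, 0) | 3 => (1, 1) | 4 => (1, -1)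

lemma pairRep_pairClass {x y : ℝ} (hx : x ∈ ({0, 1, -1} : Set ℝ))
    (hy : y ∈ ({0, 1, -1} : Set ℝ)) :
    pairRep (pairClass x y) = (x, y) ∨ pairRep (pairClass x y) = -(x, y) := by
  rcases hx with rfl | rfl | rfl <;> rcases hy with rfl | rfl | rfl <;>
    norm_num [pairClass, pairRep]

lemma exists_unitary_smul_pairRep {x y : ℝ} (hx : x ∈ ({0, 1, -1} : Set ℝ))
    (hy : y ∈ ({0, 1, -1} : Set ℝ)) :
    ∃ u : unitary ℝ, (u : ℝ) • pairRep (pairClass x y) = (x, y) := by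
  rcases pairRep_pairClass hx hy with h | h
  · exact ⟨1, by simp [h]⟩
  · exact ⟨-1, by simp [h, Unitary.coe_neg]⟩

namespace TCset

variable {n : ℕ}

lemma mem_iff_abs {p : EuclideanSpace ℝ (Fin n)} :
    p ∈ TCset n ↔ ∃ i₀, p i₀ = 0 ∧ ∀ i ≠ i₀, |p i| = 1 := by
  simp only [TCset, Set.mem_ofPred_eq, abs_eq zero_le_one]

lemma mem_of_abs_eq_comp {p q : EuclideanSpace ℝ (Fin n)} (σ : Equiv.Perm (Fin n))
    (h : ∀ i, |q i| = |p (σ.symm i)|) (hp : p ∈ TCset n) : q ∈ TCset n := by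
  rw [mem_iff_abs] at hp ⊢
  obtain ⟨i₀, h0, h1⟩ := hp
  refine ⟨σ i₀, abs_eq_zero.mp ?_, fun i hi => ?_⟩
  · rw [h, σ.symm_apply_apply, h0, abs_zero]
  · rw [h]
    exact h1 _ (by rintro rfl; simp at hi)

lemma signedPerm_mem_iff (σ : Equiv.Perm (Fin n)) (ε : Fin n → unitary ℝ)
    (p : EuclideanSpace ℝ (Fin n)) : p ∈ TCset n ↔ signedPerm σ ε p ∈ TCset n :=
  ⟨mem_of_abs_eq_comp σ (abs_signedPerm_apply σ ε p),
    mem_of_abs_eq_comp σ.symm fun i => by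
      rw [abs_signedPerm_apply, Equiv.symm_symm, σ.symm_apply_apply]⟩

noncomputable def signedPermIso (σ : Equiv.Perm (Fin n)) (ε : Fin n → unitary ℝ) :
    TCset n ≃ᵢ TCset n :=
  (signedPerm σ ε).toIsometryEquiv.subtypeEquiv (signedPerm_mem_iff σ ε)

lemma apply_mem {p : EuclideanSpace ℝ (Fin n)} (hp : p ∈ TCset n) (i : Fin n) :
    p i ∈ ({0, 1, -1} : Set ℝ) := by
  obtain ⟨i₀, h0, h1⟩ := hp
  rcases eq_or_ne i i₀ with rfl | hi
  · exact Or.inl h0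
  · exact Or.inr (h1 i hi)

lemma sum_sq_add_one {p : EuclideanSpace ℝ (Fin n)} (hp : p ∈ TCset n) :
    ∑ i, p i ^ 2 + 1 = n := by
  obtain ⟨i₀, h0, h1⟩ := hp
  calc ∑ i, p i ^ 2 + 1 = ∑ i, (p i ^ 2 + if i = i₀ then 1 else 0) := by
        rw [sum_add_distrib, sum_ite_eq', if_pos (mem_univ _)]
    _ = ∑ _ : Fin n, (1 : ℝ) := sum_congr rfl fun i _ => by
        rcases eq_or_ne i i₀ with rfl | hi
        · simp [h0]
        · rcases h1 i hi with h | h <;> simp [h, hi]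
    _ = n := by simp

noncomputable def classCount (A B : EuclideanSpace ℝ (Fin n)) (c : Fin 5) : ℕ :=
  #{a | pairClass (A a) (B a) = c}

lemma sum_eq_sum_classCount {A B : EuclideanSpace ℝ (Fin n)} (hA : A ∈ TCset n)
    (hB : B ∈ TCset n) (φ : ℝ × ℝ → ℝ) (hφ : ∀ v, φ (-v) = φ v) :
    ∑ a, φ (A a, B a) = ∑ c, classCount A B c * φ (pairRep c) := by
  have hrep (a : Fin n) : φ (A a, B a) = φ (pairRep (pairClass (A a) (B a))) := by
    rcases pairRep_pairClass (apply_mem hA a) (apply_mem hB a) with h | h <;> simp only [h, hφ]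
  simp_rw [hrep, ← sum_fiberwise univ (fun a => pairClass (A a) (B a))]
  refine sum_congr rfl fun c _ => ?_
  rw [sum_congr rfl fun a ha => by rw [(mem_filter.mp ha).2], sum_const, nsmul_eq_mul,
    classCount]

lemma classCount_relations {A B : EuclideanSpace ℝ (Fin n)} (hA : A ∈ TCset n)
    (hB : B ∈ TCset n) :
    classCount A B 0 + classCount A B 1 + classCount A B 2 + classCount A B 3 +
        classCount A B 4 = n ∧
      classCount A B 2 + classCount A B 3 + classCount A B 4 + 1 = n ∧
      classCount A B 1 + classCount A B 3 + classCount A B 4 + 1 = n ∧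
      ((classCount A B 1 + classCount A B 2 + 4 * classCount A B 4 : ℕ) : ℝ) = dist A B ^ 2 := by
  have hcount := sum_eq_sum_classCount hA hB (fun _ => 1) fun _ => rfl
  have hA2 := sum_eq_sum_classCount hA hB (fun v => v.1 ^ 2) fun v => by simp
  have hB2 := sum_eq_sum_classCount hA hB (fun v => v.2 ^ 2) fun v => by simp
  have hAB := sum_eq_sum_classCount hA hB (fun v => (v.1 - v.2) ^ 2) fun v => by simp; ring
  have hdist : dist A B ^ 2 = ∑ a, (A a - B a) ^ 2 := by
    rw [EuclideanSpace.dist_eq, Real.sq_sqrt (by positivity)]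
    simp [Real.dist_eq, sq_abs]
  have hnA := sum_sq_add_one hA
  have hnB := sum_sq_add_one hB
  norm_num [Fin.sum_univ_five, pairRep] at hcount hA2 hB2 hAB
  refine ⟨?_, ?_, ?_, ?_⟩
  · exact_mod_cast hcount.symm
  · exact_mod_cast (show (classCount A B 2 : ℝ) + classCount A B 3 + classCount A B 4 + 1 = n
      by linarith)
  · exact_mod_cast (show (classCount A B 1 : ℝ) + classCount A B 3 + classCount A B 4 + 1 = n
      by linarith)
  · push_cast
    linarith

lemma classCount_eq_of_dist_eq {A₁ A₂ B₁ B₂ : EuclideanSpace ℝ (Fin n)} (hA₁ : A₁ ∈ TCset n)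
    (hA₂ : A₂ ∈ TCset n) (hB₁ : B₁ ∈ TCset n) (hB₂ : B₂ ∈ TCset n)
    (h : dist A₁ A₂ = dist B₁ B₂) : classCount A₁ A₂ = classCount B₁ B₂ := by
  obtain ⟨totalA, firstA, secondA, distA⟩ := classCount_relations hA₁ hA₂
  obtain ⟨totalB, firstB, secondB, distB⟩ := classCount_relations hB₁ hB₂
  rw [h, ← distB] at distA
  have hdist := Nat.cast_injective distA
  -- `N₁ = N₂ = 1 - N₀` with `N₀ ≤ 1`, so `dist² = 2 - 2 N₀ + 4 N₄` determines `N₀` and `N₄`.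
  funext c
  fin_cases c <;> simp only [Fin.zero_eta, Fin.mk_one, Fin.reduceFinMk] <;> omega

lemma exists_signedPerm_eq {A₁ A₂ B₁ B₂ : EuclideanSpace ℝ (Fin n)} (hA₁ : A₁ ∈ TCset n)
    (hA₂ : A₂ ∈ TCset n) (hB₁ : B₁ ∈ TCset n) (hB₂ : B₂ ∈ TCset n)
    (h : classCount A₁ A₂ = classCount B₁ B₂) :
    ∃ σ ε, signedPerm σ ε A₁ = B₁ ∧ signedPerm σ ε A₂ = B₂ := by
  obtain ⟨σ, hσ⟩ := exists_perm_comp_eq_of_card_fiber_eq (f := fun a => pairClass (A₁ a) (A₂ a))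
    (g := fun a => pairClass (B₁ a) (B₂ a)) fun c => by
      simpa [Fintype.card_subtype, classCount] using congrFun h c
  choose uA huA using fun a => exists_unitary_smul_pairRep (apply_mem hA₁ a) (apply_mem hA₂ a)
  choose uB huB using fun a => exists_unitary_smul_pairRep (apply_mem hB₁ a) (apply_mem hB₂ a)
  have hpair (i : Fin n) : ((uB i * star (uA (σ.symm i)) : unitary ℝ) : ℝ) •
      (A₁ (σ.symm i), A₂ (σ.symm i)) = (B₁ i, B₂ i) := by
    rw [← huA, ← huB, ← hσ (σ.symm i), σ.apply_symm_apply, smul_smul, ← Submonoid.coe_mul,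
      mul_assoc, Unitary.star_mul_self, mul_one]
  refine ⟨σ, fun i => uB i * star (uA (σ.symm i)), ?_, ?_⟩ <;> ext i
  · exact congrArg Prod.fst (hpair i)
  · exact congrArg Prod.snd (hpair i)

end TCset

theorem stmt_5 (n : ℕ) :
    ∀ A₁ A₂ B₁ B₂ : ↥(TCset n), dist A₁ A₂ = dist B₁ B₂ →
      ∃ e : ↥(TCset n) ≃ᵢ ↥(TCset n), e A₁ = B₁ ∧ e A₂ = B₂ := by
  intro A₁ A₂ B₁ B₂ hd
  obtain ⟨σ, ε, h₁, h₂⟩ := TCset.exists_signedPerm_eq A₁.2 A₂.2 B₁.2 B₂.2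
    (TCset.classCount_eq_of_dist_eq A₁.2 A₂.2 B₁.2 B₂.2 hd)
  exact ⟨TCset.signedPermIso σ ε, Subtype.ext h₁, Subtype.ext h₂⟩
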